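/- arXiv:2003.09402 — 3 statements merged into one kernel-verified Lean document; each statement's English description precedes it below -/
import Mathlib

section
/- Consider the one-step RATTLE map with momentum reversal on T*Σ: given (x,p) ∈ T*Σ and Lagrange multipliers (λ_x, λ_p) ∈ ℝ^k × ℝ^k with x¹ = x + τM⁻¹p − (τ²/2)M⁻¹∇V̄(x) + τM⁻¹∇ξ(x)λ_x, p¹ = p − (τ/2)(∇V̄(x) + ∇V̄(x¹)) + ∇ξ(x)λ_x + ∇ξ(x¹)λ_p, and p^{1,−} = −p¹, and suppose the constraints ξ(x¹) = 0 and ∇ξ(x¹)ᵀM⁻¹p¹ = 0 hold (so (λ_x, λ_p) is an admissible pair from (x,p) to (x¹, p^{1,−})). Then (λ_p, λ_x) is an admissible pair of Lagrange multipliers from (x¹, p^{1,−}) back to (x, p). -/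
open Matrix

/-- `(λ_x, λ_p)` is an admissible pair of Lagrange multipliers from `(x,p)` to
`(x¹, p^{1,-})` for the one-step RATTLE scheme with momentum reversal:
the position and (reversed) momentum updates hold and both constraints
`ξ(x¹) = 0` and `∇ξ(x¹)ᵀ M⁻¹ p^{1,-} = 0` are satisfied. -/
def RattleAdmissible (d k : ℕ) (ξ : (Fin d → ℝ) → (Fin k → ℝ))
    (J : (Fin d → ℝ) → Matrix (Fin d) (Fin k) ℝ)
    (M : Matrix (Fin d) (Fin d) ℝ) (gV : (Fin d → ℝ) → (Fin d → ℝ)) (τ : ℝ)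
    (x p x1 p1m : Fin d → ℝ) (lx lp : Fin k → ℝ) : Prop :=
  x1 = x + τ • M⁻¹.mulVec p - (τ ^ 2 / 2) • M⁻¹.mulVec (gV x)
      + τ • M⁻¹.mulVec ((J x).mulVec lx)
  ∧ p1m = -(p - (τ / 2) • (gV x + gV x1) + (J x).mulVec lx + (J x1).mulVec lp)
  ∧ ξ x1 = 0
  ∧ (J x1)ᵀ.mulVec (M⁻¹.mulVec p1m) = 0

/-- Time-reversal symmetry of RATTLE with momentum reversal: if `(λ_x, λ_p)` is an
admissible pair from `(x,p) ∈ T*Σ` to `(x¹, p^{1,-})`, then `(λ_p, λ_x)` is an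
admissible pair from `(x¹, p^{1,-})` back to `(x, p)`. -/
theorem rattle_reverse_admissible
    (d k : ℕ) (hk : 1 ≤ k) (hkd : k < d)
    (ξ : (Fin d → ℝ) → (Fin k → ℝ)) (hξ : ContDiff ℝ (⊤ : ℕ∞) ξ)
    (J : (Fin d → ℝ) → Matrix (Fin d) (Fin k) ℝ)
    (hJ : ∀ z i j, J z i j = fderiv ℝ ξ z (Pi.single i 1) j)
    (M : Matrix (Fin d) (Fin d) ℝ) (hM : M.PosDef)
    (Vb : (Fin d → ℝ) → ℝ) (hVb : ContDiff ℝ 2 Vb)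
    (gV : (Fin d → ℝ) → (Fin d → ℝ))
    (hgV : ∀ z i, gV z i = fderiv ℝ Vb z (Pi.single i 1))
    (τ : ℝ) (hτ : 0 < τ)
    (x p x1 p1m : Fin d → ℝ) (lx lp : Fin k → ℝ)
    (hxSigma : ξ x = 0) (hpT : (J x)ᵀ.mulVec (M⁻¹.mulVec p) = 0)
    (h : RattleAdmissible d k ξ J M gV τ x p x1 p1m lx lp) :
    RattleAdmissible d k ξ J M gV τ x1 p1m x p lp lx := by
  obtain ⟨h1, h2, h3, h4⟩ := h
  have hx1 := h1
  refine ⟨?_, ?_, hxSigma, hpT⟩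
  · rw [h2, hx1]
    simp only [Matrix.mulVec_add, Matrix.mulVec_sub, Matrix.mulVec_smul,
      Matrix.mulVec_neg]
    module
  · rw [h2]
    module
end

section
/- In the setting of the RATTLE scheme with momentum reversal, suppose (λ_x, λ_p) is an admissible pair from (x,p) to (x¹, p^{1,−}), and suppose (λ_x⁻, λ_p⁻) is an admissible pair from (x¹, p^{1,−}) to some (x̄, p̄) with x̄ = x. Then (λ_x⁻, λ_p⁻) = (λ_p, λ_x) and p̄ = p. -/
open Matrix

lemma mulVec_inj_of_rank {d k : ℕ} (A : Matrix (Fin d) (Fin k) ℝ) (h : A.rank = k) :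
    Function.Injective A.mulVec := by
  have hd : LinearMap.ker A.mulVecLin = ⊥ := by
    have h2 := LinearMap.finrank_range_add_finrank_ker A.mulVecLin
    rw [Module.finrank_pi] at h2
    rw [Matrix.rank] at h
    have : Module.finrank ℝ (LinearMap.ker A.mulVecLin) = 0 := by
      simp [Fintype.card_fin] at h2; omega
    exact Submodule.finrank_eq_zero.mp this
  exact LinearMap.ker_eq_bot.mp hd

/-- Rigidity of the Lagrange multipliers: if `(λ_x, λ_p)` is admissible from `(x,p)` to
`(x¹, p^{1,-})` and `(λ_x⁻, λ_p⁻)` is admissible from `(x¹, p^{1,-})` to `(x̄, p̄)` with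
`x̄ = x`, then `(λ_x⁻, λ_p⁻) = (λ_p, λ_x)` and `p̄ = p`. -/
theorem rattle_multipliers_unique
    (d k : ℕ) (hk : 1 ≤ k) (hkd : k < d)
    (ξ : (Fin d → ℝ) → (Fin k → ℝ)) (hξ : ContDiff ℝ (⊤ : ℕ∞) ξ)
    (J : (Fin d → ℝ) → Matrix (Fin d) (Fin k) ℝ)
    (hJ : ∀ z i j, J z i j = fderiv ℝ ξ z (Pi.single i 1) j)
    (M : Matrix (Fin d) (Fin d) ℝ) (hM : M.PosDef)
    (Vb : (Fin d → ℝ) → ℝ) (hVb : ContDiff ℝ 2 Vb)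
    (gV : (Fin d → ℝ) → (Fin d → ℝ))
    (hgV : ∀ z i, gV z i = fderiv ℝ Vb z (Pi.single i 1))
    (τ : ℝ) (hτ : 0 < τ)
    (x p x1 p1m xb pb : Fin d → ℝ) (lx lp lxm lpm : Fin k → ℝ)
    (hxSigma : ξ x = 0) (hpT : (J x)ᵀ.mulVec (M⁻¹.mulVec p) = 0)
    (hrankx : (J x).rank = k) (hrankx1 : (J x1).rank = k)
    (h1 : RattleAdmissible d k ξ J M gV τ x p x1 p1m lx lp)
    (h2 : RattleAdmissible d k ξ J M gV τ x1 p1m xb pb lxm lpm)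
    (hxb : xb = x) :
    lxm = lp ∧ lpm = lx ∧ pb = p := by
  obtain ⟨e1, e2, -, -⟩ := h1
  obtain ⟨f1, f2, -, f4⟩ := h2
  have hMinv : (M⁻¹).PosDef := hM.inv
  -- Step 1: lxm = lp
  have hv : τ • M⁻¹.mulVec ((J x1).mulVec lxm) = τ • M⁻¹.mulVec ((J x1).mulVec lp) := by
    rw [hxb, e2] at f1
    funext i
    have h := congrFun f1 i
    have he := congrFun e1 i
    simp only [Matrix.mulVec_neg, Matrix.mulVec_add, Matrix.mulVec_sub, Matrix.mulVec_smul,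
      Pi.add_apply, Pi.sub_apply, Pi.neg_apply, Pi.smul_apply, smul_eq_mul] at h he ⊢
    linarith
  have hlxm : lxm = lp := by
    apply mulVec_inj_of_rank _ hrankx1
    apply Matrix.mulVec_injective_iff_isUnit.mpr hMinv.isUnit
    exact smul_right_injective _ hτ.ne' hv
  -- Step 2: pb = p + J x *ᵥ (lx - lpm)
  have hpb : pb = p + (J x).mulVec (lx - lpm) := by
    rw [hxb, hlxm, e2] at f2
    funext i
    have h := congrFun f2 i
    simp only [Matrix.mulVec_sub, Pi.add_apply, Pi.sub_apply, Pi.neg_apply, Pi.smul_apply,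
      smul_eq_mul] at h ⊢
    linarith
  -- Step 3: lpm = lx
  have hC : (J x)ᵀ.mulVec (M⁻¹.mulVec ((J x).mulVec (lx - lpm))) = 0 := by
    rw [hxb, hpb] at f4
    simpa [Matrix.mulVec_add, hpT] using f4
  set v := (J x).mulVec (lx - lpm) with hvdef
  have hdot : v ⬝ᵥ (M⁻¹.mulVec v) = 0 := by
    have h0 : (lx - lpm) ⬝ᵥ ((J x)ᵀ.mulVec (M⁻¹.mulVec v)) = 0 := by rw [hC]; simp
    rwa [Matrix.dotProduct_mulVec, Matrix.vecMul_transpose] at h0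
  have hv0 : v = 0 := by
    by_contra hne
    have := hMinv.dotProduct_mulVec_pos hne
    simp [hdot] at this
  have hlpm : lpm = lx := by
    have h1 : (J x).mulVec (lx - lpm) = (J x).mulVec 0 := by simpa using hv0
    have h2 := mulVec_inj_of_rank _ hrankx h1
    exact (sub_eq_zero.mp h2).symm
  refine ⟨hlxm, hlpm, ?_⟩
  simp [hpb, hv0]
end

section
/- Given two positions x, x¹ ∈ Σ, the momentum p ∈ T*_xΣ such that the one-step RATTLE scheme maps (x,p) to (x¹, p^{1,−}) for some admissible (λ_x, λ_p) is uniquely determined by p = G_{M,x}(x¹) := (1/τ) P_M(x) M (x¹ − x + (τ²/2) M⁻¹∇V̄(x)). -/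
open Matrix

/-- Given positions `x, x¹ ∈ Σ`, the momentum `p ∈ T*_xΣ` such that one RATTLE step maps
`(x,p)` to `(x¹, p^{1,-})` for some admissible Lagrange multipliers is uniquely
determined by `p = G_{M,x}(x¹) = (1/τ) P_M(x) M (x¹ - x + (τ²/2) M⁻¹ ∇V̄(x))`. -/
theorem rattle_momentum_determined_by_positions
    (d k : ℕ) (hk : 1 ≤ k) (hkd : k < d)
    (ξ : (Fin d → ℝ) → (Fin k → ℝ)) (hξ : ContDiff ℝ (⊤ : ℕ∞) ξ)
    (J : (Fin d → ℝ) → Matrix (Fin d) (Fin k) ℝ)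
    (hJ : ∀ z i j, J z i j = fderiv ℝ ξ z (Pi.single i 1) j)
    (M : Matrix (Fin d) (Fin d) ℝ) (hM : M.PosDef)
    (Vb : (Fin d → ℝ) → ℝ) (hVb : ContDiff ℝ 2 Vb)
    (gV : (Fin d → ℝ) → (Fin d → ℝ))
    (hgV : ∀ z i, gV z i = fderiv ℝ Vb z (Pi.single i 1))
    (τ : ℝ) (hτ : 0 < τ)
    (x p x1 p1m : Fin d → ℝ) (lx lp : Fin k → ℝ)
    (hxSigma : ξ x = 0) (hpT : (J x)ᵀ.mulVec (M⁻¹.mulVec p) = 0)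
    (hrankx : (J x).rank = k)
    (P : Matrix (Fin d) (Fin d) ℝ)
    (hP : P = 1 - J x * ((J x)ᵀ * M⁻¹ * J x)⁻¹ * (J x)ᵀ * M⁻¹)
    (h : RattleAdmissible d k ξ J M gV τ x p x1 p1m lx lp) :
    p = (1 / τ) • P.mulVec (M.mulVec (x1 - x + (τ ^ 2 / 2) • M⁻¹.mulVec (gV x))) := by
  obtain ⟨h1, -, -, -⟩ := h
  -- injectivity of `J x` on vectors
  have hinj : ∀ v : Fin k → ℝ, (J x) *ᵥ v = 0 → v = 0 := by
    have hker : LinearMap.ker (J x).mulVecLin = ⊥ := by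
      have hrn := LinearMap.finrank_range_add_finrank_ker (J x).mulVecLin
      rw [Matrix.rank] at hrankx
      rw [hrankx] at hrn
      simp only [Module.finrank_pi, Fintype.card_fin] at hrn
      have h0 : Module.finrank ℝ (LinearMap.ker (J x).mulVecLin) = 0 := by omega
      exact Submodule.finrank_eq_zero.mp h0
    intro v hv
    exact Matrix.ker_mulVecLin_eq_bot_iff.mp hker v hv
  set A : Matrix (Fin k) (Fin k) ℝ := (J x)ᵀ * M⁻¹ * J x with hA
  have hApd : A.PosDef := by
    refine Matrix.PosDef.of_dotProduct_mulVec_pos ?_ ?_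
    · have := (hM.inv.posSemidef.conjTranspose_mul_mul_same (J x)).1
      simpa [Matrix.conjTranspose_eq_transpose_of_trivial] using this
    · intro v hv
      have hJv : (J x) *ᵥ v ≠ 0 := fun hc => hv (hinj v hc)
      have h2 := hM.inv.dotProduct_mulVec_pos hJv
      have hAv : A *ᵥ v = (J x)ᵀ *ᵥ (M⁻¹ *ᵥ ((J x) *ᵥ v)) := by
        rw [hA, ← Matrix.mulVec_mulVec, ← Matrix.mulVec_mulVec]
      rw [hAv, star_trivial, Matrix.dotProduct_mulVec, Matrix.vecMul_transpose]
      simpa using h2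
  have hAA : A⁻¹ * A = 1 :=
    Matrix.nonsing_inv_mul A ((Matrix.isUnit_iff_isUnit_det A).mp hApd.isUnit)
  have hMM : M * M⁻¹ = 1 :=
    Matrix.mul_nonsing_inv M ((Matrix.isUnit_iff_isUnit_det M).mp hM.isUnit)
  have hMinv : ∀ v : Fin d → ℝ, M *ᵥ (M⁻¹ *ᵥ v) = v := fun v => by
    rw [Matrix.mulVec_mulVec, hMM, Matrix.one_mulVec]
  -- the vector fed to P
  have hw : M *ᵥ (x1 - x + (τ ^ 2 / 2) • M⁻¹ *ᵥ gV x)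
      = τ • p + τ • ((J x) *ᵥ lx) := by
    have key : x1 - x + (τ ^ 2 / 2) • M⁻¹ *ᵥ gV x
        = τ • (M⁻¹ *ᵥ p) + τ • (M⁻¹ *ᵥ ((J x) *ᵥ lx)) := by
      rw [h1]; abel
    rw [key, Matrix.mulVec_add, Matrix.mulVec_smul, Matrix.mulVec_smul, hMinv, hMinv]
  have hPp : P *ᵥ p = p := by
    rw [hP, Matrix.sub_mulVec, Matrix.one_mulVec, ← Matrix.mulVec_mulVec,
      ← Matrix.mulVec_mulVec, hpT]
    simp
  have hPJ : P *ᵥ ((J x) *ᵥ lx) = 0 := by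
    have hJA : J x * A⁻¹ * (J x)ᵀ * M⁻¹ * J x = J x := by
      calc J x * A⁻¹ * (J x)ᵀ * M⁻¹ * J x
          = J x * (A⁻¹ * ((J x)ᵀ * M⁻¹ * J x)) := by simp only [Matrix.mul_assoc]
        _ = J x := by rw [← hA, hAA, Matrix.mul_one]
    rw [hP, Matrix.sub_mulVec, Matrix.one_mulVec, Matrix.mulVec_mulVec, hJA, sub_self]
  rw [hw, Matrix.mulVec_add, Matrix.mulVec_smul, Matrix.mulVec_smul, hPp, hPJ,
    smul_zero, add_zero, smul_smul, one_div, inv_mul_cancel₀ hτ.ne', one_smul]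
end
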